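/- (Left residuation for ↓) Let y be a state variable not occurring in α or β. For any Kripke model M and assignment g: M,g ⊩ α ≤ ↓x.β iff for every world w ∈ W, the inequality (A(y → α) ∧ y) ≤ β[y/x] holds in (M, g[y↦w]). -/

import Mathlib

inductive Form where
  | prop : ℕ → Form
  | nom : ℕ → Form
  | svar : ℕ → Form
  | bot : Form
  | top : Form
  | neg : Form → Form
  | and : Form → Form → Form
  | or : Form → Form → Form
  | imp : Form → Form → Form
  | box : Form → Form
  | dia : Form → Form
  | atN : ℕ → Form → Form
  | atS : ℕ → Form → Form
  | bind : ℕ → Form → Form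
  | bbox : Form → Form
  | bdia : Form → Form
  | glA : Form → Form
  | glE : Form → Form
  | sall : ℕ → Form → Form
  | sex : ℕ → Form → Form

structure Model (W : Type) where
  R : W → W → Prop
  Vp : ℕ → W → Prop
  Vn : ℕ → W

def upd {W : Type} (g : ℕ → W) (x : ℕ) (w : W) : ℕ → W :=
  fun y => if y = x then w else g y

def sat {W : Type} (M : Model W) : (ℕ → W) → W → Form → Prop
  | _, w, .prop p => M.Vp p w
  | _, w, .nom i => M.Vn i = w
  | g, w, .svar x => g x = w
  | _, _, .bot => False
  | _, _, .top => True
  | g, w, .neg φ => ¬ sat M g w φ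
  | g, w, .and φ ψ => sat M g w φ ∧ sat M g w ψ
  | g, w, .or φ ψ => sat M g w φ ∨ sat M g w ψ
  | g, w, .imp φ ψ => sat M g w φ → sat M g w ψ
  | g, w, .box φ => ∀ v, M.R w v → sat M g v φ
  | g, w, .dia φ => ∃ v, M.R w v ∧ sat M g v φ
  | g, _, .atN i φ => sat M g (M.Vn i) φ
  | g, _, .atS x φ => sat M g (g x) φ
  | g, w, .bind x φ => sat M (upd g x w) w φ
  | g, w, .bbox φ => ∀ v, M.R v w → sat M g v φ
  | g, w, .bdia φ => ∃ v, M.R v w ∧ sat M g v φ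
  | g, _, .glA φ => ∀ v, sat M g v φ
  | g, _, .glE φ => ∃ v, sat M g v φ
  | g, w, .sall x φ => ∀ v, sat M (upd g x v) w φ
  | g, w, .sex x φ => ∃ v, sat M (upd g x v) w φ

/-- The inequality φ ≤ ψ holds in (M,g). -/
def holdsIneq {W : Type} (M : Model W) (g : ℕ → W) (φ ψ : Form) : Prop :=
  ∀ w, sat M g w φ → sat M g w ψ

/-- Frame validity of an inequality. -/
def validIneq {W : Type} (R : W → W → Prop) (φ ψ : Form) : Prop :=
  ∀ (Vp : ℕ → W → Prop) (Vn : ℕ → W) (g : ℕ → W),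
    holdsIneq ⟨R, Vp, Vn⟩ g φ ψ

/-- The state variable `x` occurs in the formula (free or bound). -/
def svarIn (x : ℕ) : Form → Prop
  | .prop _ => False
  | .nom _ => False
  | .svar y => y = x
  | .bot => False
  | .top => False
  | .neg φ => svarIn x φ
  | .and φ ψ => svarIn x φ ∨ svarIn x ψ
  | .or φ ψ => svarIn x φ ∨ svarIn x ψ
  | .imp φ ψ => svarIn x φ ∨ svarIn x ψ
  | .box φ => svarIn x φ
  | .dia φ => svarIn x φ
  | .atN _ φ => svarIn x φ
  | .atS y φ => y = x ∨ svarIn x φ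
  | .bind y φ => y = x ∨ svarIn x φ
  | .bbox φ => svarIn x φ
  | .bdia φ => svarIn x φ
  | .glA φ => svarIn x φ
  | .glE φ => svarIn x φ
  | .sall y φ => y = x ∨ svarIn x φ
  | .sex y φ => y = x ∨ svarIn x φ

/-- Substitution of the state variable `y` for free occurrences of the state variable `x`. -/
def substSvar (x y : ℕ) : Form → Form
  | .prop q => .prop q
  | .nom i => .nom i
  | .svar z => if z = x then .svar y else .svar z
  | .bot => .bot
  | .top => .top
  | .neg φ => .neg (substSvar x y φ)
  | .and φ ψ => .and (substSvar x y φ) (substSvar x y ψ)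
  | .or φ ψ => .or (substSvar x y φ) (substSvar x y ψ)
  | .imp φ ψ => .imp (substSvar x y φ) (substSvar x y ψ)
  | .box φ => .box (substSvar x y φ)
  | .dia φ => .dia (substSvar x y φ)
  | .atN i φ => .atN i (substSvar x y φ)
  | .atS z φ => if z = x then .atS y (substSvar x y φ) else .atS z (substSvar x y φ)
  | .bind z φ => if z = x then .bind z φ else .bind z (substSvar x y φ)
  | .bbox φ => .bbox (substSvar x y φ)
  | .bdia φ => .bdia (substSvar x y φ)
  | .glA φ => .glA (substSvar x y φ)
  | .glE φ => .glE (substSvar x y φ)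
  | .sall z φ => if z = x then .sall z φ else .sall z (substSvar x y φ)
  | .sex z φ => if z = x then .sex z φ else .sex z (substSvar x y φ)

/-!
For fresh `y`, the antecedent `A (y → α) ∧ y` holds at `v` under `g[y ↦ w]` iff `v = w` and `α`
holds at `w`. So the right-hand side says that `α` at `w` forces `β[y/x]` at `w`
under `g[y ↦ w]`, which by the substitution and coincidence lemmas is `β` at `w` under `g[x ↦ w]`,
i.e. `↓x.β` at `w`.
-/

section

variable {W : Type}

section Upd

variable (g : ℕ → W) (x : ℕ)

theorem upd_self (w : W) : upd g x w x = w := by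
  simp [upd]

theorem upd_of_ne {z : ℕ} (h : z ≠ x) (w : W) : upd g x w z = g z := by
  simp [upd, h]

theorem upd_upd_self (v w : W) : upd (upd g x v) x w = upd g x w := by
  funext z
  by_cases h : z = x <;> simp [upd, h]

theorem upd_comm {z : ℕ} (h : z ≠ x) (v w : W) :
    upd (upd g x v) z w = upd (upd g z w) x v := by
  funext u
  by_cases hx : u = x <;> by_cases hz : u = z <;> simp_all [upd]

theorem upd_eq_upd_of_eqOn {g' : ℕ → W} {P : ℕ → Prop} (h : ∀ z, P z → g z = g' z) (w : W) :
    ∀ z, P z → upd g x w z = upd g' x w z := by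
  intro z hz
  by_cases hzx : z = x <;> simp [upd, hzx, h z hz]

end Upd

theorem sat_congr (M : Model W) {φ : Form} {g g' : ℕ → W} (h : ∀ z, svarIn z φ → g z = g' z)
    (w : W) : sat M g w φ ↔ sat M g' w φ := by
  induction φ generalizing g g' w with
  | prop | nom | bot | top => exact Iff.rfl
  | svar z => simp only [sat, h z rfl]
  | neg φ ih | box φ ih | dia φ ih | atN _ φ ih | bbox φ ih | bdia φ ih | glA φ ih | glE φ ih =>
    simp only [sat, ih h]
  | and φ ψ ih₁ ih₂ | or φ ψ ih₁ ih₂ | imp φ ψ ih₁ ih₂ =>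
    simp only [sat, ih₁ fun z hz => h z (.inl hz), ih₂ fun z hz => h z (.inr hz)]
  | atS z φ ih => simp only [sat, h z (.inl rfl), ih fun u hu => h u (.inr hu)]
  | bind z φ ih => exact ih (upd_eq_upd_of_eqOn g z (fun u hu => h u (.inr hu)) w) w
  | sall z φ ih | sex z φ ih =>
    simp only [sat, ih (upd_eq_upd_of_eqOn g z (fun u hu => h u (.inr hu)) _)]

theorem sat_upd_of_not_svarIn (M : Model W) {φ : Form} {y : ℕ} (hy : ¬ svarIn y φ)
    (g : ℕ → W) (w v : W) : sat M (upd g y w) v φ ↔ sat M g v φ :=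
  sat_congr M (fun z hz => upd_of_ne g y (by rintro rfl; exact hy hz) w) v

/-- Freshness of `y` rules out its capture by a binder of `φ`. -/
theorem sat_substSvar (M : Model W) {φ : Form} {y : ℕ} (hy : ¬ svarIn y φ) (x : ℕ)
    (g : ℕ → W) (w : W) : sat M g w (substSvar x y φ) ↔ sat M (upd g x (g y)) w φ := by
  induction φ generalizing g w with
  | prop | nom | bot | top => exact Iff.rfl
  | svar z => by_cases hz : z = x <;> simp [substSvar, sat, upd, hz]
  | neg φ ih | box φ ih | dia φ ih | atN _ φ ih | bbox φ ih | bdia φ ih | glA φ ih | glE φ ih =>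
    simp only [substSvar, sat, ih hy]
  | and φ ψ ih₁ ih₂ | or φ ψ ih₁ ih₂ | imp φ ψ ih₁ ih₂ =>
    simp only [svarIn, not_or] at hy
    simp only [substSvar, sat, ih₁ hy.1, ih₂ hy.2]
  | atS z φ ih =>
    simp only [svarIn, not_or] at hy
    by_cases hz : z = x
    · subst hz; simp only [substSvar, if_pos, sat, upd_self, ih hy.2]
    · simp only [substSvar, if_neg hz, sat, upd_of_ne g x hz, ih hy.2]
  | bind z φ ih | sall z φ ih | sex z φ ih =>
    simp only [svarIn, not_or] at hy
    by_cases hz : z = x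
    · subst hz; simp only [substSvar, if_pos, sat, upd_upd_self]
    · simp only [substSvar, if_neg hz, sat, ih hy.2, upd_of_ne g z (Ne.symm hy.1), upd_comm g x hz]

theorem sat_substSvar_upd_of_not_svarIn (M : Model W) {φ : Form} {y : ℕ} (hy : ¬ svarIn y φ)
    (x : ℕ) (g : ℕ → W) (w v : W) :
    sat M (upd g y w) v (substSvar x y φ) ↔ sat M (upd g x w) v φ := by
  rw [sat_substSvar M hy, upd_self]
  by_cases hxy : x = y
  · subst hxy; rw [upd_upd_self]
  · rw [← upd_comm g x (Ne.symm hxy), sat_upd_of_not_svarIn M hy]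

theorem sat_glA_imp_svar_and_svar (M : Model W) (g : ℕ → W) (y : ℕ) (α : Form) (v : W) :
    sat M g v (.and (.glA (.imp (.svar y) α)) (.svar y)) ↔ g y = v ∧ sat M g (g y) α := by
  simp only [sat, forall_eq']
  exact and_comm

end

theorem left_residuation_downarrow {W : Type} (M : Model W) (g : ℕ → W)
    (x y : ℕ) (α β : Form) (hyα : ¬ svarIn y α) (hyβ : ¬ svarIn y β) :
    holdsIneq M g α (.bind x β) ↔
      ∀ w : W, holdsIneq M (upd g y w)
        (.and (.glA (.imp (.svar y) α)) (.svar y)) (substSvar x y β) := by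
  have sat_bind (w : W) : sat M g w (.bind x β) ↔ sat M (upd g x w) w β := Iff.rfl
  simp only [holdsIneq, sat_bind, sat_glA_imp_svar_and_svar, upd_self,
    sat_upd_of_not_svarIn M hyα, sat_substSvar_upd_of_not_svarIn M hyβ, and_imp, forall_eq']
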